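/- arXiv:2412.00512 — 2 statements merged into one kernel-verified Lean document; each statement's English description precedes it below -/
import Mathlib

section
/- Let H be a real Hilbert space and let A, B ⊆ H be nonempty closed convex sets. If x ∈ A, then P_B(x) is a circumcenter of x with respect to (A, B), and it is the unique such circumcenter; in particular, the CRM step from a point of A lands in B. -/
open RealInnerProductSpace Pointwise

/-- `p` is the metric projection of `x` onto `C`: the point of `C` such that
`⟪y - p, x - p⟫ ≤ 0` for all `y ∈ C`. -/
def IsProj {E : Type*} [NormedAddCommGroup E] [InnerProductSpace ℝ E]
    (C : Set E) (x p : E) : Prop :=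
  p ∈ C ∧ ∀ y ∈ C, ⟪y - p, x - p⟫ ≤ 0

/-- `c` is a circumcenter of `x` with respect to `(A, B)`: writing `R_A x = 2 P_A x - x`
and `R_B (R_A x) = 2 P_B (R_A x) - R_A x`, the point `c` lies in the affine span of
`{x, R_A x, R_B (R_A x)}` and is equidistant from these three points. -/
def IsCircumcenter {E : Type*} [NormedAddCommGroup E] [InnerProductSpace ℝ E]
    (A B : Set E) (x c : E) : Prop :=
  ∃ pa pb : E, IsProj A x pa ∧ IsProj B ((2 : ℝ) • pa - x) pb ∧
    c ∈ affineSpan ℝ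
      ({x, (2 : ℝ) • pa - x, (2 : ℝ) • pb - ((2 : ℝ) • pa - x)} : Set E) ∧
    ‖c - x‖ = ‖c - ((2 : ℝ) • pa - x)‖ ∧
    ‖c - x‖ = ‖c - ((2 : ℝ) • pb - ((2 : ℝ) • pa - x))‖

/-!
For `x ∈ A` we have `P_A x = x`, so `R_A x = x` and the three points collapse to the segment
from `x` to its reflection `R_B x = 2 P_B x - x`. On a line, the only point equidistant from two
points is their midpoint, and the midpoint of `x` and `R_B x` is `P_B x`.
-/

theorem two_smul_sub_self {R M : Type*} [Ring R] [AddCommGroup M] [Module R M] (x : M) :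
    (2 : R) • x - x = x := by
  rw [two_smul, add_sub_cancel_right]

theorem midpoint_two_smul_sub {R M : Type*} [Ring R] [Invertible (2 : R)] [AddCommGroup M]
    [Module R M] (x p : M) : midpoint R x ((2 : R) • p - x) = p := by
  rw [midpoint_eq_smul_add, add_sub_cancel, smul_smul, invOf_mul_self, one_smul]

theorem eq_midpoint_of_mem_affineSpan_pair_of_dist_eq {V P : Type*} [NormedAddCommGroup V]
    [NormedSpace ℝ V] [MetricSpace P] [NormedAddTorsor V P] {x y c : P}
    (hc : c ∈ line[ℝ, x, y]) (h : dist c x = dist c y) : c = midpoint ℝ x y := by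
  obtain ⟨r, rfl⟩ := mem_affineSpan_pair_iff_exists_lineMap_eq.mp hc
  rcases eq_or_ne x y with rfl | hxy
  · simp
  rw [dist_lineMap_left, dist_lineMap_right] at h
  have hr : |r| = |1 - r| := mul_right_cancel₀ (dist_ne_zero.mpr hxy) h
  have hr_half : r = 2⁻¹ := by rcases abs_eq_abs.mp hr with h | h <;> linarith
  rw [hr_half, midpoint, invOf_eq_inv]

section

variable {E : Type*} [NormedAddCommGroup E] [InnerProductSpace ℝ E]

theorem IsProj.unique {C : Set E} {x p q : E} (hp : IsProj C x p) (hq : IsProj C x q) :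
    p = q := by
  have hpq : ⟪q - p, q - p⟫ ≤ 0 := by
    have e : ⟪q - p, x - p⟫ + ⟪p - q, x - q⟫ = ⟪q - p, q - p⟫ := by
      rw [← neg_sub q p, inner_neg_left, ← sub_eq_add_neg, ← inner_sub_right]
      congr 1
      abel
    exact e ▸ add_nonpos (hp.2 q hq.1) (hq.2 p hp.1)
  exact (sub_eq_zero.mp (real_inner_self_nonpos.mp hpq)).symm

theorem isProj_self {C : Set E} {x : E} (hx : x ∈ C) : IsProj C x x :=
  ⟨hx, fun y _ => by simp⟩

variable {A B : Set E} {x pb c : E}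

theorem isCircumcenter_of_mem_left (hx : x ∈ A) (hpb : IsProj B x pb) :
    IsCircumcenter A B x pb := by
  refine ⟨x, pb, isProj_self hx, ?_⟩
  simp only [two_smul_sub_self, Set.insert_eq_of_mem (Set.mem_insert x _), hpb, true_and]
  have hmid : midpoint ℝ x ((2 : ℝ) • pb - x) ∈ line[ℝ, x, (2 : ℝ) • pb - x] ∧
      dist (midpoint ℝ x ((2 : ℝ) • pb - x)) x =
        dist (midpoint ℝ x ((2 : ℝ) • pb - x)) ((2 : ℝ) • pb - x) :=
    ⟨AffineMap.lineMap_mem_affineSpan_pair _ _ _,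
      (dist_midpoint_left _ _).trans (dist_midpoint_right _ _).symm⟩
  simpa only [midpoint_two_smul_sub, dist_eq_norm] using hmid

theorem IsCircumcenter.eq_of_mem_left (hx : x ∈ A) (hpb : IsProj B x pb)
    (hc : IsCircumcenter A B x c) : c = pb := by
  obtain ⟨pa, pb', hpa, hpb', hspan, -, hdist⟩ := hc
  obtain rfl := hpa.unique (isProj_self hx)
  simp only [two_smul_sub_self, Set.insert_eq_of_mem (Set.mem_insert pa _)] at hpb' hspan hdist
  obtain rfl := hpb'.unique hpb
  rw [← midpoint_two_smul_sub (R := ℝ) pa pb']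
  exact eq_midpoint_of_mem_affineSpan_pair_of_dist_eq hspan (by simpa only [dist_eq_norm])

end

theorem crm_step_from_A_general
    {H : Type*} [NormedAddCommGroup H] [InnerProductSpace ℝ H]
    (A B : Set H)
    (x : H) (hxA : x ∈ A) (pb : H) (hpb : IsProj B x pb) :
    IsCircumcenter A B x pb ∧ (∀ c : H, IsCircumcenter A B x c → c = pb) ∧ pb ∈ B :=
  ⟨isCircumcenter_of_mem_left hxA hpb, fun _ hc => hc.eq_of_mem_left hxA hpb, hpb.1⟩

/-- For nonempty closed convex sets `A, B` in a real Hilbert space, if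
`x ∈ A` and `pb = P_B x`, then `pb` is a circumcenter of `x` with respect to `(A, B)`,
it is the unique such circumcenter, and it lies in `B`. -/
theorem crm_step_from_A
    {H : Type*} [NormedAddCommGroup H] [InnerProductSpace ℝ H] [CompleteSpace H]
    (A B : Set H) (hAne : A.Nonempty) (hAcl : IsClosed A) (hAcv : Convex ℝ A)
    (hBne : B.Nonempty) (hBcl : IsClosed B) (hBcv : Convex ℝ B)
    (x : H) (hxA : x ∈ A) (pb : H) (hpb : IsProj B x pb) :
    IsCircumcenter A B x pb ∧ (∀ c : H, IsCircumcenter A B x c → c = pb) ∧ pb ∈ B :=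
  crm_step_from_A_general A B x hxA pb hpb
end

section
/- Let A = cone{(3,0,3), (0,1,3), (0,−1,3), (−3,0,−2)} and B = cone{(1,3,0), (1,−3,0), (−3,0,−1)} be proper polyhedral cones in ℝ³ (their intersection A ∩ B is nontrivial). Then there exists an initial point x⁰ ∈ ℝ³ such that the circumcentered-reflection method does not reach A ∩ B in finitely many steps: for every N ∈ ℕ and every finite sequence x₀ = x⁰, x₁, …, x_N in which each x_{k+1} is a circumcenter of x_k with respect to (A, B), one has x_N ∉ A ∩ B. -/
open RealInnerProductSpace Pointwise

/-- The point of `ℝ³ = EuclideanSpace ℝ (Fin 3)` with coordinates `(a, b, c)`. -/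
noncomputable def vec3 (a b c : ℝ) : EuclideanSpace ℝ (Fin 3) :=
  (WithLp.equiv 2 (Fin 3 → ℝ)).symm ![a, b, c]

/-!
Starting from `x₀ = (4, -3, 0)`, the CRM orbit alternates between the open rays through
`v = (4, -3, 0)` and `w = (114, 62, 21)`. Direct computation gives the circumcenters
`C(v) = (270/17281) w` and `C(w) = (54/5) v`; since projections and circumcenters are unique
and `A`, `B` are cones, `C(t x) = t C(x)` for `t > 0`. The ray through `v` misses `A`, because
the functional `(1, -1, -1)` is nonpositive on the generators of `A` but positive at `v`; the ray
through `w` misses `B`, because the third coordinate is nonpositive on `B` but positive at `w`.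
-/

section InnerProductSpace

variable {E : Type*} [NormedAddCommGroup E] [InnerProductSpace ℝ E]

theorem IsProj.smul {C : Set E} (hC : ∀ t : ℝ, 0 < t → ∀ y ∈ C, t • y ∈ C) {x p : E}
    (h : IsProj C x p) {t : ℝ} (ht : 0 < t) : IsProj C (t • x) (t • p) := by
  refine ⟨hC t ht p h.1, fun y hy => ?_⟩
  have hy' : y - t • p = t • (t⁻¹ • y - p) := by
    rw [smul_sub, smul_inv_smul₀ ht.ne']
  rw [← smul_sub, hy', real_inner_smul_left, real_inner_smul_right]
  exact mul_nonpos_of_nonneg_of_nonpos ht.le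
    (mul_nonpos_of_nonneg_of_nonpos ht.le (h.2 _ (hC _ (inv_pos.mpr ht) y hy)))

theorem add_smul_sub_mem_affineSpan_triple (p₀ p₁ p₂ : E) (a b : ℝ) :
    p₀ + a • (p₁ - p₀) + b • (p₂ - p₀) ∈ affineSpan ℝ ({p₀, p₁, p₂} : Set E) := by
  rw [add_assoc, add_comm]
  refine AffineSubspace.vadd_mem_of_mem_direction ?_ (mem_affineSpan ℝ (by simp))
  rw [direction_affineSpan]
  exact add_mem (Submodule.smul_mem _ _ (vsub_mem_vectorSpan ℝ (by simp) (by simp)))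
    (Submodule.smul_mem _ _ (vsub_mem_vectorSpan ℝ (by simp) (by simp)))

theorem eq_of_mem_affineSpan_of_norm_sub_eq {s : Set E} {c₁ c₂ : E}
    (h₁ : c₁ ∈ affineSpan ℝ s) (h₂ : c₂ ∈ affineSpan ℝ s) {r₁ r₂ : ℝ}
    (hr₁ : ∀ p ∈ s, ‖c₁ - p‖ = r₁) (hr₂ : ∀ p ∈ s, ‖c₂ - p‖ = r₂) : c₁ = c₂ := by
  have hspan : c₂ - c₁ ∈ vectorSpan ℝ s := by
    rw [← direction_affineSpan]; exact AffineSubspace.vsub_mem_direction h₂ h₁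
  have hperp : vectorSpan ℝ s ≤ (ℝ ∙ (c₂ - c₁))ᗮ := by
    rw [vectorSpan_def, Submodule.span_le]
    rintro _ ⟨p, hp, q, hq, rfl⟩
    rw [SetLike.mem_coe, Submodule.mem_orthogonal_singleton_iff_inner_right]
    refine EuclideanGeometry.inner_vsub_vsub_of_dist_eq_of_dist_eq (p₁ := q) (p₂ := p) ?_ ?_ <;>
      simp only [dist_comm _ c₁, dist_comm _ c₂, dist_eq_norm, hr₁, hr₂, hp, hq]
  have := Submodule.inner_right_of_mem_orthogonal (Submodule.mem_span_singleton_self _)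
    (hperp hspan)
  exact (sub_eq_zero.mp (inner_self_eq_zero.mp this)).symm

theorem IsCircumcenter.unique {A B : Set E} {x c₁ c₂ : E} (h₁ : IsCircumcenter A B x c₁)
    (h₂ : IsCircumcenter A B x c₂) : c₁ = c₂ := by
  obtain ⟨pa, pb, hpa, hpb, hs₁, hx₁, hy₁⟩ := h₁
  obtain ⟨pa', pb', hpa', hpb', hs₂, hx₂, hy₂⟩ := h₂
  obtain rfl := hpa.unique hpa'
  obtain rfl := hpb.unique hpb'
  refine eq_of_mem_affineSpan_of_norm_sub_eq hs₁ hs₂ (r₁ := ‖c₁ - x‖) (r₂ := ‖c₂ - x‖) ?_ ?_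
  · rintro p (rfl | rfl | rfl)
    exacts [rfl, hx₁.symm, hy₁.symm]
  · rintro p (rfl | rfl | rfl)
    exacts [rfl, hx₂.symm, hy₂.symm]

section Cones

variable {A B : Set E} (hA : ∀ t : ℝ, 0 < t → ∀ y ∈ A, t • y ∈ A)
  (hB : ∀ t : ℝ, 0 < t → ∀ y ∈ B, t • y ∈ B)
include hA hB

theorem IsCircumcenter.smul {x c : E} (h : IsCircumcenter A B x c) {t : ℝ} (ht : 0 < t) :
    IsCircumcenter A B (t • x) (t • c) := by
  obtain ⟨pa, pb, hpa, hpb, hs, hx, hy⟩ := h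
  have hRA : (2 : ℝ) • t • pa - t • x = t • ((2 : ℝ) • pa - x) := by module
  have hRB : (2 : ℝ) • t • pb - t • ((2 : ℝ) • pa - x) =
      t • ((2 : ℝ) • pb - ((2 : ℝ) • pa - x)) := by module
  refine ⟨t • pa, t • pb, hpa.smul hA ht, hRA ▸ hpb.smul hB ht, ?_, ?_, ?_⟩
  · have := AffineSubspace.mem_map_of_mem (t • LinearMap.id (R := ℝ) (M := E)).toAffineMap hs
    rw [AffineSubspace.map_span, Set.image_insert_eq, Set.image_insert_eq,
      Set.image_singleton] at this
    simpa [hRA, hRB] using this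
  · rw [hRA, ← smul_sub, ← smul_sub, norm_smul, norm_smul, hx]
  · rw [hRA, hRB, ← smul_sub, ← smul_sub, norm_smul, norm_smul, hy]

theorem IsCircumcenter.eq_smul_of_smul {x c₀ c : E} (h₀ : IsCircumcenter A B x c₀) {t : ℝ}
    (ht : 0 < t) (h : IsCircumcenter A B (t • x) c) : c = t • c₀ :=
  h.unique (h₀.smul hA hB ht)

end Cones

theorem notMem_of_isCircumcenter_invariant {A B S : Set E}
    (hS : ∀ x ∈ S, ∀ c, IsCircumcenter A B x c → c ∈ S) (hSAB : Disjoint S (A ∩ B))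
    {x : ℕ → E} (hx₀ : x 0 ∈ S) {N : ℕ} (hx : ∀ k < N, IsCircumcenter A B (x k) (x (k + 1))) :
    x N ∉ A ∩ B := by
  have hmem : ∀ k ≤ N, x k ∈ S := by
    intro k hk
    induction k with
    | zero => exact hx₀
    | succ k ih => exact hS _ (ih (by omega)) _ (hx k hk)
  exact hSAB.notMem_of_mem_left (hmem N le_rfl)

end InnerProductSpace

section ConicHull

variable {ι M : Type*} [Fintype ι]

def conicHull [AddCommMonoid M] [Module ℝ M] (v : ι → M) : Set M :=
  {x | ∃ α : ι → ℝ, (∀ i, 0 ≤ α i) ∧ x = ∑ i, α i • v i}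

theorem smul_mem_conicHull [AddCommMonoid M] [Module ℝ M] {v : ι → M} {t : ℝ} (ht : 0 ≤ t)
    {x : M} (hx : x ∈ conicHull v) : t • x ∈ conicHull v := by
  obtain ⟨α, hα, rfl⟩ := hx
  exact ⟨t • α, fun i => mul_nonneg ht (hα i), by simp [Finset.smul_sum, smul_smul]⟩

variable [NormedAddCommGroup M] [InnerProductSpace ℝ M] {v : ι → M}

theorem isProj_conicHull {x p : M} (hp : p ∈ conicHull v) (hpx : ⟪p, x - p⟫ = 0)
    (hv : ∀ i, ⟪v i, x - p⟫ ≤ 0) : IsProj (conicHull v) x p := by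
  refine ⟨hp, ?_⟩
  rintro _ ⟨α, hα, rfl⟩
  rw [inner_sub_left, hpx, sub_zero, sum_inner]
  exact Finset.sum_nonpos fun i _ => by
    rw [real_inner_smul_left]; exact mul_nonpos_of_nonneg_of_nonpos (hα i) (hv i)

theorem notMem_conicHull_of_inner {u x : M} (hv : ∀ i, ⟪v i, u⟫ ≤ 0) (hx : 0 < ⟪x, u⟫) :
    x ∉ conicHull v := by
  rintro ⟨α, hα, rfl⟩
  rw [sum_inner] at hx
  refine hx.not_ge (Finset.sum_nonpos fun i _ => ?_)
  rw [real_inner_smul_left]; exact mul_nonpos_of_nonneg_of_nonpos (hα i) (hv i)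

end ConicHull

section Vec3

@[simp]
theorem vec3_add (a b c d e f : ℝ) :
    vec3 a b c + vec3 d e f = vec3 (a + d) (b + e) (c + f) := by
  ext i; fin_cases i <;> simp [vec3]

@[simp]
theorem vec3_sub (a b c d e f : ℝ) :
    vec3 a b c - vec3 d e f = vec3 (a - d) (b - e) (c - f) := by
  ext i; fin_cases i <;> simp [vec3]

@[simp]
theorem smul_vec3 (t a b c : ℝ) : t • vec3 a b c = vec3 (t * a) (t * b) (t * c) := by
  ext i; fin_cases i <;> simp [vec3]

@[simp]
theorem inner_vec3 (a b c d e f : ℝ) :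
    ⟪vec3 a b c, vec3 d e f⟫ = a * d + b * e + c * f := by
  simp [vec3, PiLp.inner_apply, Fin.sum_univ_three]; ring

@[simp]
theorem norm_vec3 (a b c : ℝ) : ‖vec3 a b c‖ = √(a ^ 2 + b ^ 2 + c ^ 2) := by
  simp [vec3, EuclideanSpace.norm_eq, Fin.sum_univ_three]

end Vec3

def crmConeA : Set (EuclideanSpace ℝ (Fin 3)) :=
  conicHull ![vec3 3 0 3, vec3 0 1 3, vec3 0 (-1) 3, vec3 (-3) 0 (-2)]

def crmConeB : Set (EuclideanSpace ℝ (Fin 3)) :=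
  conicHull ![vec3 1 3 0, vec3 1 (-3) 0, vec3 (-3) 0 (-1)]

theorem isCircumcenter_crmCones_vec3_4_neg3_0 :
    IsCircumcenter crmConeA crmConeB (vec3 4 (-3) 0) ((270 / 17281 : ℝ) • vec3 114 62 21) := by
  refine ⟨vec3 2 0 2, vec3 (9 / 10) (27 / 10) 0, isProj_conicHull ?_ ?_ ?_,
    isProj_conicHull ?_ ?_ ?_, ?_, ?_, ?_⟩
  · exact ⟨![2 / 3, 0, 0, 0], by norm_num [Fin.forall_fin_succ], by norm_num [Fin.sum_univ_succ]⟩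
  · norm_num
  · norm_num [Fin.forall_fin_succ]
  · exact ⟨![9 / 10, 0, 0], by norm_num [Fin.forall_fin_succ], by norm_num [Fin.sum_univ_succ]⟩
  · norm_num
  · norm_num [Fin.forall_fin_succ]
  · convert add_smul_sub_mem_affineSpan_triple _ _ _ (13375 / 34562) (5270 / 17281) using 1
    norm_num
  · norm_num
  · norm_num

theorem isCircumcenter_crmCones_vec3_114_62_21 :
    IsCircumcenter crmConeA crmConeB (vec3 114 62 21) ((54 / 5 : ℝ) • vec3 4 (-3) 0) := by
  refine ⟨vec3 (135 / 2) 0 (135 / 2), vec3 21 (-62) 0, isProj_conicHull ?_ ?_ ?_,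
    isProj_conicHull ?_ ?_ ?_, ?_, ?_, ?_⟩
  · exact ⟨![45 / 2, 0, 0, 0], by norm_num [Fin.forall_fin_succ], by norm_num [Fin.sum_univ_succ]⟩
  · norm_num
  · norm_num [Fin.forall_fin_succ]
  · exact ⟨![1 / 6, 125 / 6, 0], by norm_num [Fin.forall_fin_succ],
      by norm_num [Fin.sum_univ_succ]⟩
  · norm_num
  · norm_num [Fin.forall_fin_succ]
  · convert add_smul_sub_mem_affineSpan_triple _ _ _ (845 / 2356) (153 / 380) using 1
    norm_num
  · norm_num
  · norm_num

theorem smul_vec3_4_neg3_0_notMem_crmConeA {t : ℝ} (ht : 0 < t) :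
    t • vec3 4 (-3) 0 ∉ crmConeA :=
  notMem_conicHull_of_inner (u := vec3 1 (-1) (-1)) (by norm_num [Fin.forall_fin_succ])
    (by norm_num; linarith)

theorem smul_vec3_114_62_21_notMem_crmConeB {t : ℝ} (ht : 0 < t) :
    t • vec3 114 62 21 ∉ crmConeB :=
  notMem_conicHull_of_inner (u := vec3 0 0 1) (by norm_num [Fin.forall_fin_succ])
    (by norm_num; linarith)

/-- Let `A = cone{(3,0,3), (0,1,3), (0,−1,3), (−3,0,−2)}` and
`B = cone{(1,3,0), (1,−3,0), (−3,0,−1)}` in `ℝ³`. Then there is an initial point `x⁰` such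
that the circumcentered-reflection method does not reach `A ∩ B` in finitely many steps:
every finite CRM iteration sequence started at `x⁰` ends outside `A ∩ B`. -/
theorem crm_concrete_cones_R3_no_finite_convergence
    (A B : Set (EuclideanSpace ℝ (Fin 3)))
    (hA : A = {x : EuclideanSpace ℝ (Fin 3) | ∃ α : Fin 4 → ℝ, (∀ i, 0 ≤ α i) ∧
      x = ∑ i, α i •
        ![vec3 3 0 3, vec3 0 1 3, vec3 0 (-1) 3, vec3 (-3) 0 (-2)] i})
    (hB : B = {x : EuclideanSpace ℝ (Fin 3) | ∃ β : Fin 3 → ℝ, (∀ i, 0 ≤ β i) ∧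
      x = ∑ i, β i • ![vec3 1 3 0, vec3 1 (-3) 0, vec3 (-3) 0 (-1)] i}) :
    ∃ x₀ : EuclideanSpace ℝ (Fin 3), ∀ (N : ℕ) (x : ℕ → EuclideanSpace ℝ (Fin 3)),
      x 0 = x₀ → (∀ k < N, IsCircumcenter A B (x k) (x (k + 1))) → x N ∉ A ∩ B := by
  obtain rfl : A = crmConeA := hA
  obtain rfl : B = crmConeB := hB
  have hA : ∀ t : ℝ, 0 < t → ∀ y ∈ crmConeA, t • y ∈ crmConeA :=
    fun _ ht _ => smul_mem_conicHull ht.le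
  have hB : ∀ t : ℝ, 0 < t → ∀ y ∈ crmConeB, t • y ∈ crmConeB :=
    fun _ ht _ => smul_mem_conicHull ht.le
  set S := {y | ∃ t : ℝ, 0 < t ∧ (y = t • vec3 4 (-3) 0 ∨ y = t • vec3 114 62 21)}
  have hS : ∀ y ∈ S, ∀ c, IsCircumcenter crmConeA crmConeB y c → c ∈ S := by
    rintro _ ⟨t, ht, rfl | rfl⟩ c hc
    · rw [isCircumcenter_crmCones_vec3_4_neg3_0.eq_smul_of_smul hA hB ht hc, smul_smul]
      exact ⟨_, by positivity, Or.inr rfl⟩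
    · rw [isCircumcenter_crmCones_vec3_114_62_21.eq_smul_of_smul hA hB ht hc, smul_smul]
      exact ⟨_, by positivity, Or.inl rfl⟩
  have hSAB : Disjoint S (crmConeA ∩ crmConeB) := by
    rw [Set.disjoint_left]
    rintro _ ⟨t, ht, rfl | rfl⟩ hAB
    exacts [smul_vec3_4_neg3_0_notMem_crmConeA ht hAB.1,
      smul_vec3_114_62_21_notMem_crmConeB ht hAB.2]
  refine ⟨vec3 4 (-3) 0, fun N x hx₀ hx => notMem_of_isCircumcenter_invariant hS hSAB ?_ hx⟩
  exact ⟨1, one_pos, Or.inl (by rw [hx₀, one_smul])⟩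
end
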